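/- arXiv:math/0406120 — 4 statements merged into one kernel-verified Lean document; each statement's English description precedes it below -/
import Mathlib

section
/- The integral of ξ(t) = (cos²t + 2t·sin t·cos t + t² − π²/4)/cos²t over [0, π/2] equals −π/2 (interpreting ξ by its continuous extension with ξ(π/2) = 0). -/
open Real Set

open Filter Topology MeasureTheory intervalIntegral

noncomputable def xi (t : ℝ) : ℝ :=
  (Real.cos t ^ 2 + 2 * t * Real.sin t * Real.cos t + t ^ 2 - Real.pi ^ 2 / 4) / Real.cos t ^ 2

/-- `p` is `1 - ξ`, written so that it is nonnegative on `[0, π/2]`. -/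
noncomputable def pAux (t : ℝ) : ℝ :=
  (Real.pi ^ 2 / 4 - t ^ 2 - 2 * t * Real.sin t * Real.cos t) / Real.cos t ^ 2

lemma cos_pos_aux {x : ℝ} (h0 : 0 ≤ x) (h1 : x < π / 2) : 0 < Real.cos x :=
  Real.cos_pos_of_mem_Ioo ⟨by linarith [Real.pi_pos], h1⟩

lemma hasDerivAt_F {x : ℝ} (hx : Real.cos x ≠ 0) :
    HasDerivAt (fun t : ℝ => (t ^ 2 - π ^ 2 / 4) * Real.tan t)
      (2 * x * Real.tan x + (x ^ 2 - π ^ 2 / 4) * (1 / Real.cos x ^ 2)) x := by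
  have h1 : HasDerivAt (fun t : ℝ => t ^ 2 - π ^ 2 / 4) (2 * x) x := by
    simpa using (hasDerivAt_pow 2 x).sub_const (π ^ 2 / 4)
  exact h1.mul (Real.hasDerivAt_tan hx)

lemma hasDerivAt_G {x : ℝ} (hx : Real.cos x ≠ 0) :
    HasDerivAt (fun t : ℝ => t + (t ^ 2 - π ^ 2 / 4) * Real.tan t) (xi x) x := by
  have h := (hasDerivAt_id x).add (hasDerivAt_F hx)
  refine h.congr_deriv ?_
  unfold xi
  rw [Real.tan_eq_sin_div_cos]
  field_simp
  ring

lemma hasDerivAt_negF {x : ℝ} (hx : Real.cos x ≠ 0) :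
    HasDerivAt (fun t : ℝ => -((t ^ 2 - π ^ 2 / 4) * Real.tan t)) (pAux x) x := by
  have h := (hasDerivAt_F hx).neg
  refine h.congr_deriv ?_
  unfold pAux
  rw [Real.tan_eq_sin_div_cos]
  field_simp
  ring

lemma pAux_nonneg {x : ℝ} (h0 : 0 ≤ x) (h1 : x ≤ π / 2) : 0 ≤ pAux x := by
  unfold pAux
  apply div_nonneg _ (sq_nonneg _)
  have hs : 2 * x * Real.sin x * Real.cos x = x * Real.sin (2 * x) := by
    rw [Real.sin_two_mul]; ring
  rw [hs]
  have h2 : Real.sin (2 * x) = Real.sin (π - 2 * x) := (Real.sin_pi_sub _).symm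
  have h3 : Real.sin (π - 2 * x) ≤ π - 2 * x := Real.sin_le (by linarith)
  have h4 : x * Real.sin (2 * x) ≤ x * (π - 2 * x) := by
    rw [h2]
    exact mul_le_mul_of_nonneg_left h3 h0
  nlinarith [sq_nonneg (π / 2 - x)]

lemma tendsto_F : Tendsto (fun t : ℝ => (t ^ 2 - π ^ 2 / 4) * Real.tan t)
    (𝓝[<] (π / 2)) (𝓝 (-π)) := by
  have h1 : Tendsto (fun t : ℝ => (t - π / 2) / Real.cos t) (𝓝[<] (π / 2)) (𝓝 (-1)) := by
    have hc := Real.hasDerivAt_cos (π / 2)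
    rw [hasDerivAt_iff_tendsto_slope] at hc
    have hinv : Tendsto (fun t : ℝ => (slope Real.cos (π / 2) t)⁻¹) (𝓝[≠] (π / 2))
        (𝓝 (-Real.sin (π / 2))⁻¹) := hc.inv₀ (by simp)
    have heq : ∀ t : ℝ, (slope Real.cos (π / 2) t)⁻¹ = (t - π / 2) / Real.cos t := by
      intro t
      rw [slope_def_field, Real.cos_pi_div_two, sub_zero, inv_div]
    have : Tendsto (fun t : ℝ => (t - π / 2) / Real.cos t) (𝓝[≠] (π / 2))
        (𝓝 (-Real.sin (π / 2))⁻¹) := hinv.congr heq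
    have h2 : (-Real.sin (π / 2))⁻¹ = -1 := by norm_num
    rw [h2] at this
    exact this.mono_left (nhdsWithin_mono _ fun x hx => ne_of_lt hx)
  have h2 : Tendsto (fun t : ℝ => (t + π / 2) * Real.sin t) (𝓝[<] (π / 2)) (𝓝 π) := by
    have : ContinuousAt (fun t : ℝ => (t + π / 2) * Real.sin t) (π / 2) :=
      ((continuous_id.add continuous_const).mul Real.continuous_sin).continuousAt
    have h3 := this.tendsto.mono_left (nhdsWithin_le_nhds (s := Iio (π/2)))
    simp only [Real.sin_pi_div_two, mul_one] at h3
    have : π / 2 + π / 2 = π := by ring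
    rw [this] at h3
    exact h3
  have h := h1.mul h2
  have hval : (-1 : ℝ) * π = -π := by ring
  rw [hval] at h
  refine h.congr fun t => ?_
  rw [Real.tan_eq_sin_div_cos]
  simp only [div_eq_mul_inv]
  ring

lemma integrable_pAux : IntegrableOn pAux (Ioc 0 (π / 2)) := by
  classical
  set f : ℝ → ℝ := fun t => -((t ^ 2 - π ^ 2 / 4) * Real.tan t) with hf
  set g : ℝ → ℝ := Function.update f (π / 2) π with hg
  have hcont : ContinuousOn g (Icc 0 (π / 2)) := by
    rw [hg, continuousOn_update_iff]
    constructor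
    · intro x hx
      have hx1 : x < π / 2 := lt_of_le_of_ne hx.1.2 (by simpa using hx.2)
      have hc : Real.cos x ≠ 0 := (cos_pos_aux hx.1.1 hx1).ne'
      exact (hasDerivAt_negF hc).continuousAt.continuousWithinAt
    · intro _
      have := tendsto_F.neg
      rw [neg_neg] at this
      refine this.mono_left (nhdsWithin_mono _ fun x hx => ?_)
      exact lt_of_le_of_ne hx.1.2 (by simpa using hx.2)
  refine integrableOn_deriv_of_nonneg hcont (fun x hx => ?_) fun x hx =>
    pAux_nonneg hx.1.le hx.2.le
  have hc : Real.cos x ≠ 0 := (cos_pos_aux hx.1.le hx.2).ne'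
  refine (hasDerivAt_negF hc).congr_of_eventuallyEq ?_
  filter_upwards [Iio_mem_nhds hx.2] with y hy
  rw [hg, Function.update_of_ne (ne_of_lt hy)]

lemma xi_eq {x : ℝ} (hx : Real.cos x ≠ 0) : xi x = 1 - pAux x := by
  unfold xi pAux
  field_simp
  ring

lemma intervalIntegrable_xi : IntervalIntegrable xi volume 0 (π / 2) := by
  rw [intervalIntegrable_iff_integrableOn_Ioo_of_le (by positivity)]
  have h1 : IntegrableOn (fun x => 1 - pAux x) (Ioo 0 (π / 2)) :=
    (integrableOn_const measure_Ioo_lt_top.ne).sub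
      (integrable_pAux.mono_set Ioo_subset_Ioc_self)
  refine h1.congr_fun (fun x hx => ?_) measurableSet_Ioo
  exact (xi_eq (cos_pos_aux hx.1.le hx.2).ne').symm

theorem stmt_3 : ∫ t in (0:ℝ)..(π / 2), xi t = -(π / 2) := by
  have hab : (0 : ℝ) < π / 2 := by positivity
  have hderiv : ∀ x ∈ Ioo (0 : ℝ) (π / 2),
      HasDerivAt (fun t : ℝ => t + (t ^ 2 - π ^ 2 / 4) * Real.tan t) (xi x) x :=
    fun x hx => hasDerivAt_G (cos_pos_aux hx.1.le hx.2).ne'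
  have ha : Tendsto (fun t : ℝ => t + (t ^ 2 - π ^ 2 / 4) * Real.tan t) (𝓝[>] (0 : ℝ))
      (𝓝 0) := by
    have hc : ContinuousAt (fun t : ℝ => t + (t ^ 2 - π ^ 2 / 4) * Real.tan t) 0 :=
      (hasDerivAt_G (by simp)).continuousAt
    have h := hc.tendsto.mono_left (nhdsWithin_le_nhds (s := Ioi (0:ℝ)))
    simpa using h
  have hb : Tendsto (fun t : ℝ => t + (t ^ 2 - π ^ 2 / 4) * Real.tan t) (𝓝[<] (π / 2))
      (𝓝 (-(π / 2))) := by
    have hid : Tendsto (fun t : ℝ => t) (𝓝[<] (π / 2)) (𝓝 (π / 2)) :=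
      tendsto_id.mono_left nhdsWithin_le_nhds
    have h := hid.add tendsto_F
    have : π / 2 + -π = -(π / 2) := by ring
    rwa [this] at h
  have h := integral_eq_sub_of_hasDerivAt_of_tendsto hab hderiv intervalIntegrable_xi ha hb
  rw [h]
  ring
end

section
/- The limit of ξ'(t) as t → π/2⁻ equals 2π/3, where ξ'(t) = 2(2t·cos t + t²·sin t + cos²t·sin t − (π²/4)·sin t)/cos³t. -/
open Real Set Filter

private noncomputable def Nn (t : ℝ) : ℝ :=
  2 * t * Real.cos t + t ^ 2 * Real.sin t + Real.cos t ^ 2 * Real.sin t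
    - Real.pi ^ 2 / 4 * Real.sin t

private lemma hasDerivAt_cos_sq (t : ℝ) :
    HasDerivAt (fun t : ℝ => Real.cos t ^ 2) (-(2 * Real.sin t * Real.cos t)) t := by
  have := (Real.hasDerivAt_cos t).pow 2
  refine this.congr_deriv (Eq.symm ?_)
  push_cast
  ring

private lemma hasDerivAt_Nn (t : ℝ) :
    HasDerivAt Nn (Real.cos t * (3 * Real.cos t ^ 2 + t ^ 2 - Real.pi ^ 2 / 4)) t := by
  have h1 : HasDerivAt (fun t : ℝ => 2 * t * Real.cos t)
      (2 * Real.cos t - 2 * t * Real.sin t) t := by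
    have := (((hasDerivAt_id t).const_mul (2:ℝ)).mul (Real.hasDerivAt_cos t))
    refine this.congr_deriv (Eq.symm ?_)
    simp only [id_eq]
    ring
  have h2 : HasDerivAt (fun t : ℝ => t ^ 2 * Real.sin t)
      (2 * t * Real.sin t + t ^ 2 * Real.cos t) t := by
    have := ((hasDerivAt_id t).pow 2).mul (Real.hasDerivAt_sin t)
    refine this.congr_deriv (Eq.symm ?_)
    simp only [id_eq, Pi.pow_apply, Pi.mul_apply]
    push_cast
    ring
  have h3 : HasDerivAt (fun t : ℝ => Real.cos t ^ 2 * Real.sin t)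
      (-(2 * Real.sin t * Real.cos t) * Real.sin t + Real.cos t ^ 2 * Real.cos t) t :=
    (hasDerivAt_cos_sq t).mul (Real.hasDerivAt_sin t)
  have h4 : HasDerivAt (fun t : ℝ => Real.pi ^ 2 / 4 * Real.sin t)
      (Real.pi ^ 2 / 4 * Real.cos t) t :=
    (Real.hasDerivAt_sin t).const_mul (Real.pi ^ 2 / 4)
  have := ((h1.add h2).add h3).sub h4
  refine this.congr_deriv (Eq.symm ?_)
  have hs := Real.sin_sq_add_cos_sq t
  linear_combination (2 * Real.cos t) * hs

private lemma hasDerivAt_xi (t : ℝ) (hc : Real.cos t ≠ 0) :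
    HasDerivAt xi (2 * Nn t / Real.cos t ^ 3) t := by
  have hv := hasDerivAt_cos_sq t
  have hu : HasDerivAt (fun t : ℝ =>
      Real.cos t ^ 2 + 2 * t * Real.sin t * Real.cos t + t ^ 2 - Real.pi ^ 2 / 4)
      (4 * t * Real.cos t ^ 2) t := by
    have h2 : HasDerivAt (fun t : ℝ => 2 * t * Real.sin t * Real.cos t)
        (2 * Real.sin t * Real.cos t + 2 * t * Real.cos t * Real.cos t
          + 2 * t * Real.sin t * (-Real.sin t)) t := by
      have := (((hasDerivAt_id t).const_mul (2:ℝ)).mul (Real.hasDerivAt_sin t)).mul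
        (Real.hasDerivAt_cos t)
      refine this.congr_deriv (Eq.symm ?_)
      simp only [id_eq, Pi.pow_apply, Pi.mul_apply]
      ring
    have h3 : HasDerivAt (fun t : ℝ => t ^ 2) (2 * t) t := by
      have := (hasDerivAt_id t).pow 2
      refine this.congr_deriv (Eq.symm ?_)
      simp only [id_eq]
      push_cast
      ring
    have := ((hv.add h2).add h3).sub (hasDerivAt_const t (Real.pi ^ 2 / 4))
    refine this.congr_deriv (Eq.symm ?_)
    have hs := Real.sin_sq_add_cos_sq t
    linear_combination (2 * t) * hs
  have hv2 : Real.cos t ^ 2 ≠ 0 := pow_ne_zero 2 hc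
  have hdiv := hu.div hv hv2
  have heq : (4 * t * Real.cos t ^ 2 * Real.cos t ^ 2 -
      (Real.cos t ^ 2 + 2 * t * Real.sin t * Real.cos t + t ^ 2 - Real.pi ^ 2 / 4)
        * -(2 * Real.sin t * Real.cos t)) / (Real.cos t ^ 2) ^ 2
      = 2 * Nn t / Real.cos t ^ 3 := by
    rw [div_eq_div_iff (by positivity) (pow_ne_zero 3 hc)]
    unfold Nn
    have hs := Real.sin_sq_add_cos_sq t
    linear_combination (4 * t * Real.cos t ^ 5) * hs
  rw [heq] at hdiv
  exact hdiv

private lemma mem_Ioo_eventually :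
    ∀ᶠ t in nhdsWithin (π / 2) (Iio (π / 2)), t ∈ Ioo (π / 4) (π / 2) := by
  have h : Ioo (π / 4) (π / 2) ∈ nhdsWithin (π / 2) (Iio (π / 2)) := by
    apply Ioo_mem_nhdsLT_of_mem
    constructor
    · linarith [Real.pi_pos]
    · exact le_refl _
  filter_upwards [h] with t ht using ht

private lemma cos_sin_pos {t : ℝ} (ht : t ∈ Ioo (π / 4) (π / 2)) :
    0 < Real.cos t ∧ Real.cos t < Real.sin t ∧ 0 < Real.sin t := by
  obtain ⟨h1, h2⟩ := ht
  have hpi := Real.pi_pos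
  have hcos : 0 < Real.cos t := Real.cos_pos_of_mem_Ioo ⟨by linarith, h2⟩
  have hsin : 0 < Real.sin t := Real.sin_pos_of_pos_of_lt_pi (by linarith) (by linarith)
  have hlt : Real.cos t < Real.sin t := by
    rw [← Real.sin_pi_div_two_sub]
    exact Real.strictMonoOn_sin ⟨by linarith, by linarith⟩ ⟨by linarith, by linarith⟩
      (by linarith)
  exact ⟨hcos, hlt, hsin⟩

private lemma stepB :
    Filter.Tendsto (fun t => (3 * Real.cos t ^ 2 + t ^ 2 - Real.pi ^ 2 / 4)
      / (3 * (Real.cos t * Real.sin t))) (nhdsWithin (π / 2) (Iio (π / 2)))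
      (nhds (-(π / 3))) := by
  apply HasDerivAt.lhopital_zero_nhdsLT
    (f' := fun t => -6 * Real.cos t * Real.sin t + 2 * t)
    (g' := fun t => 3 * (Real.cos t ^ 2 - Real.sin t ^ 2))
  · filter_upwards with t
    have := (((hasDerivAt_cos_sq t).const_mul (3:ℝ)).add ((hasDerivAt_id t).pow 2)).sub
      (hasDerivAt_const t (Real.pi ^ 2 / 4))
    refine this.congr_deriv (Eq.symm ?_)
    simp only [id_eq]
    push_cast
    ring
  · filter_upwards with t
    have := ((Real.hasDerivAt_cos t).mul (Real.hasDerivAt_sin t)).const_mul (3:ℝ)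
    refine this.congr_deriv (Eq.symm ?_)
    ring
  · filter_upwards [mem_Ioo_eventually] with t ht
    obtain ⟨hc, hlt, hs⟩ := cos_sin_pos ht
    have hsq : Real.cos t ^ 2 < Real.sin t ^ 2 := by nlinarith
    intro h
    nlinarith
  · have hcont : Continuous fun t => 3 * Real.cos t ^ 2 + t ^ 2 - Real.pi ^ 2 / 4 := by
      continuity
    have h := hcont.tendsto (π / 2)
    have hval : 3 * Real.cos (π / 2) ^ 2 + (π / 2) ^ 2 - Real.pi ^ 2 / 4 = 0 := by
      rw [Real.cos_pi_div_two]; ring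
    rw [hval] at h
    exact h.mono_left nhdsWithin_le_nhds
  · have hcont : Continuous fun t => 3 * (Real.cos t * Real.sin t) := by continuity
    have h := hcont.tendsto (π / 2)
    have hval : 3 * (Real.cos (π / 2) * Real.sin (π / 2)) = 0 := by
      rw [Real.cos_pi_div_two]; ring
    rw [hval] at h
    exact h.mono_left nhdsWithin_le_nhds
  · have h1 : Filter.Tendsto (fun t => -6 * Real.cos t * Real.sin t + 2 * t)
        (nhds (π / 2)) (nhds π) := by
      have hcont : Continuous fun t => -6 * Real.cos t * Real.sin t + 2 * t := by continuity
      have h := hcont.tendsto (π / 2)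
      have hval : -6 * Real.cos (π / 2) * Real.sin (π / 2) + 2 * (π / 2) = π := by
        rw [Real.cos_pi_div_two]; ring
      rwa [hval] at h
    have h2 : Filter.Tendsto (fun t => 3 * (Real.cos t ^ 2 - Real.sin t ^ 2))
        (nhds (π / 2)) (nhds (-3)) := by
      have hcont : Continuous fun t => 3 * (Real.cos t ^ 2 - Real.sin t ^ 2) := by continuity
      have h := hcont.tendsto (π / 2)
      have hval : 3 * (Real.cos (π / 2) ^ 2 - Real.sin (π / 2) ^ 2) = -3 := by
        rw [Real.cos_pi_div_two, Real.sin_pi_div_two]; norm_num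
      rwa [hval] at h
    have h := h1.div h2 (by norm_num)
    have hval : π / (-3 : ℝ) = -(π / 3) := by ring
    rw [hval] at h
    exact h.mono_left nhdsWithin_le_nhds

private lemma stepC :
    Filter.Tendsto (fun t => Nn t / Real.cos t ^ 3) (nhdsWithin (π / 2) (Iio (π / 2)))
      (nhds (π / 3)) := by
  apply HasDerivAt.lhopital_zero_nhdsLT
    (f' := fun t => Real.cos t * (3 * Real.cos t ^ 2 + t ^ 2 - Real.pi ^ 2 / 4))
    (g' := fun t => -(3 * Real.cos t ^ 2 * Real.sin t))
  · filter_upwards with t; exact hasDerivAt_Nn t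
  · filter_upwards with t
    have := (Real.hasDerivAt_cos t).pow 3
    refine this.congr_deriv (Eq.symm ?_)
    push_cast
    ring
  · filter_upwards [mem_Ioo_eventually] with t ht
    obtain ⟨hc, _, hs⟩ := cos_sin_pos ht
    have hpos : 0 < 3 * Real.cos t ^ 2 * Real.sin t := by positivity
    intro h
    rw [neg_eq_zero] at h
    linarith
  · have hcont : Continuous Nn := by unfold Nn; continuity
    have h := hcont.tendsto (π / 2)
    have hval : Nn (π / 2) = 0 := by
      unfold Nn
      rw [Real.cos_pi_div_two, Real.sin_pi_div_two]; ring
    rw [hval] at h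
    exact h.mono_left nhdsWithin_le_nhds
  · have hcont : Continuous fun t => Real.cos t ^ 3 := by continuity
    have h := hcont.tendsto (π / 2)
    have hval : Real.cos (π / 2) ^ 3 = 0 := by
      rw [Real.cos_pi_div_two]; ring
    rw [hval] at h
    exact h.mono_left nhdsWithin_le_nhds
  · have heq : ∀ᶠ t in nhdsWithin (π / 2) (Iio (π / 2)),
        -((3 * Real.cos t ^ 2 + t ^ 2 - Real.pi ^ 2 / 4) / (3 * (Real.cos t * Real.sin t)))
          = Real.cos t * (3 * Real.cos t ^ 2 + t ^ 2 - Real.pi ^ 2 / 4)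
            / -(3 * Real.cos t ^ 2 * Real.sin t) := by
      filter_upwards [mem_Ioo_eventually] with t ht
      obtain ⟨hc, _, hs⟩ := cos_sin_pos ht
      have h1 : (3 : ℝ) * (Real.cos t * Real.sin t) ≠ 0 := by positivity
      have h2 : (3 : ℝ) * Real.cos t ^ 2 * Real.sin t ≠ 0 := by positivity
      field_simp
    have h := stepB.neg
    rw [neg_neg] at h
    exact h.congr' heq

theorem stmt_7 :
    Filter.Tendsto (deriv xi) (nhdsWithin (π / 2) (Iio (π / 2)))
      (nhds (2 * π / 3)) := by
  have heq : ∀ᶠ t in nhdsWithin (π / 2) (Iio (π / 2)),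
      2 * (Nn t / Real.cos t ^ 3) = deriv xi t := by
    filter_upwards [mem_Ioo_eventually] with t ht
    obtain ⟨hc, _, _⟩ := cos_sin_pos ht
    rw [(hasDerivAt_xi t (ne_of_gt hc)).deriv]
    ring
  have h := stepC.const_mul (2:ℝ)
  have h23 : 2 * (π / 3) = 2 * π / 3 := by ring
  rw [h23] at h
  exact h.congr' heq
end

section
/- The derivative ξ'(t) = 2(2t·cos t + t²·sin t + cos²t·sin t − (π²/4)·sin t)/cos³t satisfies ξ'(t) < 0 for t ∈ (−π/2, 0) and ξ'(t) > 0 for t ∈ (0, π/2). -/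
open Real Set

lemma xi_hasDeriv (t : ℝ) (hc : Real.cos t ≠ 0) :
    HasDerivAt xi
      (2 * (2 * t * Real.cos t + t ^ 2 * Real.sin t + Real.cos t ^ 2 * Real.sin t
        - Real.pi ^ 2 / 4 * Real.sin t) / Real.cos t ^ 3) t := by
  have hs := Real.hasDerivAt_sin t
  have hcd := Real.hasDerivAt_cos t
  have hid := hasDerivAt_id t
  have hf : HasDerivAt (fun x => Real.cos x ^ 2 + 2 * x * Real.sin x * Real.cos x + x ^ 2 - Real.pi ^ 2 / 4)
      (2 * Real.cos t ^ 1 * (-Real.sin t)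
        + ((2 * 1 * Real.sin t + 2 * t * Real.cos t) * Real.cos t
            + 2 * t * Real.sin t * (-Real.sin t))
        + 2 * t ^ 1 * 1) t := by
    exact (((hcd.pow 2).add ((((hid.const_mul 2).mul hs).mul hcd))).add (hid.pow 2)).sub_const _
  have hg : HasDerivAt (fun x => Real.cos x ^ 2) (2 * Real.cos t ^ 1 * (-Real.sin t)) t :=
    hcd.pow 2
  have hg2 : Real.cos t ^ 2 ≠ 0 := pow_ne_zero _ hc
  have := hf.div hg hg2
  convert this using 1
  · rfl
  · rfl
  · rfl
  have hsq : Real.sin t ^ 2 = 1 - Real.cos t ^ 2 := by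
    have := Real.sin_sq_add_cos_sq t; linarith
  field_simp
  linear_combination (-4 * t * Real.cos t) * Real.sin_sq_add_cos_sq t

noncomputable def Gf (t : ℝ) : ℝ := 2 * t * Real.cos t / Real.sin t + t ^ 2 + Real.cos t ^ 2

lemma Gf_hasDeriv (t : ℝ) (hs : Real.sin t ≠ 0) :
    HasDerivAt Gf (2 * (Real.sin t * Real.cos t - t) * (Real.cos t ^ 2 / Real.sin t ^ 2)) t := by
  have hsd := Real.hasDerivAt_sin t
  have hcd := Real.hasDerivAt_cos t
  have hid := hasDerivAt_id t
  have h1 : HasDerivAt (fun x => 2 * x * Real.cos x / Real.sin x)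
      (((2 * 1 * Real.cos t + 2 * t * (-Real.sin t)) * Real.sin t
        - 2 * t * Real.cos t * Real.cos t) / Real.sin t ^ 2) t :=
    ((hid.const_mul 2).mul hcd).div hsd hs
  have h2 : HasDerivAt (fun x => x ^ 2) (2 * t ^ 1 * 1) t := hid.pow 2
  have h3 : HasDerivAt (fun x => Real.cos x ^ 2) (2 * Real.cos t ^ 1 * (-Real.sin t)) t :=
    hcd.pow 2
  have := (h1.add h2).add h3
  convert this using 1
  · rfl
  · rfl
  · rfl
  field_simp
  linear_combination (Real.sin t * Real.cos t) * Real.sin_sq_add_cos_sq t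

lemma Gf_anti : StrictAntiOn Gf (Ioc 0 (π / 2)) := by
  have hpi := Real.pi_pos
  apply strictAntiOn_of_deriv_neg (convex_Ioc _ _)
  · apply ContinuousOn.add
    apply ContinuousOn.add
    · apply ContinuousOn.div (by fun_prop) (by fun_prop)
      intro x hx
      exact ne_of_gt (Real.sin_pos_of_pos_of_lt_pi hx.1 (lt_of_le_of_lt hx.2 (by linarith)))
    · fun_prop
    · fun_prop
  · rw [interior_Ioc]
    intro t ht
    have ht1 := ht.1
    have ht2 := ht.2
    have hsin : 0 < Real.sin t := Real.sin_pos_of_pos_of_lt_pi ht1 (by linarith)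
    have hcos : 0 < Real.cos t := Real.cos_pos_of_mem_Ioo ⟨by linarith, ht2⟩
    rw [(Gf_hasDeriv t hsin.ne').deriv]
    have h4 : Real.sin t * Real.cos t - t < 0 := by
      have h5 : Real.sin t < t := Real.sin_lt ht1
      nlinarith [Real.cos_le_one t]
    have h6 : 0 < Real.cos t ^ 2 / Real.sin t ^ 2 := by positivity
    nlinarith

lemma key : ∀ t ∈ Ioo 0 (π / 2), 0 < 2 * t * Real.cos t + t ^ 2 * Real.sin t
    + Real.cos t ^ 2 * Real.sin t - Real.pi ^ 2 / 4 * Real.sin t := by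
  have hpi := Real.pi_pos
  intro t ht
  have ht1 := ht.1
  have ht2 := ht.2
  have hsin : 0 < Real.sin t := Real.sin_pos_of_pos_of_lt_pi ht1 (by linarith)
  have hG : Gf (π / 2) < Gf t :=
    Gf_anti ⟨ht1, ht2.le⟩ ⟨by linarith, le_refl _⟩ ht2
  have hGval : Gf (π / 2) = π ^ 2 / 4 := by
    simp [Gf, Real.cos_pi_div_two, Real.sin_pi_div_two]
    ring
  rw [hGval] at hG
  have heq : 2 * t * Real.cos t + t ^ 2 * Real.sin t + Real.cos t ^ 2 * Real.sin t
      - Real.pi ^ 2 / 4 * Real.sin t = Real.sin t * (Gf t - π ^ 2 / 4) := by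
    unfold Gf
    field_simp
  rw [heq]
  have : 0 < Gf t - π ^ 2 / 4 := by linarith
  positivity

theorem stmt_8 :
    (∀ t ∈ Ioo (-(π / 2)) 0, deriv xi t < 0) ∧
    (∀ t ∈ Ioo 0 (π / 2), 0 < deriv xi t) := by
  have hpi := Real.pi_pos
  constructor
  · intro t ht
    have ht1 := ht.1
    have ht2 := ht.2
    have hcos : 0 < Real.cos t := Real.cos_pos_of_mem_Ioo ⟨ht1, by linarith⟩
    rw [(xi_hasDeriv t hcos.ne').deriv]
    have hk := key (-t) ⟨by linarith, by linarith⟩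
    rw [Real.cos_neg, Real.sin_neg] at hk
    have hnum : 2 * t * Real.cos t + t ^ 2 * Real.sin t + Real.cos t ^ 2 * Real.sin t
        - Real.pi ^ 2 / 4 * Real.sin t < 0 := by nlinarith
    apply div_neg_of_neg_of_pos (by linarith) (by positivity)
  · intro t ht
    have ht1 := ht.1
    have ht2 := ht.2
    have hcos : 0 < Real.cos t := Real.cos_pos_of_mem_Ioo ⟨by linarith, ht2⟩
    rw [(xi_hasDeriv t hcos.ne').deriv]
    have hk := key t ht
    apply div_pos (by linarith) (by positivity)
end

section
/- The function ξ(t) = (cos²t + 2t·sin t·cos t + t² − π²/4)/cos²t satisfies 1 − π²/4 ≤ ξ(t) ≤ 0 for all t ∈ (−π/2, π/2), with minimum attained at t = 0. -/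
set_option maxHeartbeats 1600000

open Real Set

/-- Taylor-type bounds on [0,1] -/
private lemma sin_lb' {x : ℝ} (h0 : 0 ≤ x) (h1 : x ≤ 1) :
    x - x^3/6 - x^4*(5/96) ≤ Real.sin x := by
  have h := Real.sin_bound (x := x) (by rwa [abs_of_nonneg h0])
  rw [abs_of_nonneg h0] at h
  have := abs_le.1 h; nlinarith [this.1, mul_le_mul_of_nonneg_left h1 (pow_nonneg h0 4)]

private lemma sin_ub' {x : ℝ} (h0 : 0 ≤ x) (h1 : x ≤ 1) :
    Real.sin x ≤ x - x^3/6 + x^4*(5/96) := by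
  have h := Real.sin_bound (x := x) (by rwa [abs_of_nonneg h0])
  rw [abs_of_nonneg h0] at h
  have := abs_le.1 h; nlinarith [this.2, mul_le_mul_of_nonneg_left h1 (pow_nonneg h0 4)]

private lemma cos_lb' {x : ℝ} (h0 : 0 ≤ x) (h1 : x ≤ 1) :
    1 - x^2/2 - x^4*(5/96) ≤ Real.cos x := by
  have h := Real.cos_bound (x := x) (by rwa [abs_of_nonneg h0])
  rw [abs_of_nonneg h0] at h
  have := abs_le.1 h; linarith [this.1]

private lemma cos_ub' {x : ℝ} (h0 : 0 ≤ x) (h1 : x ≤ 1) :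
    Real.cos x ≤ 1 - x^2/2 + x^4*(5/96) := by
  have h := Real.cos_bound (x := x) (by rwa [abs_of_nonneg h0])
  rw [abs_of_nonneg h0] at h
  have := abs_le.1 h; linarith [this.2]

/-- univariate certificate for case-1 lower bound -/
private lemma polyR {x : ℝ} (h0 : 0 ≤ x) (h1 : x ≤ 1/2) :
    0 ≤ (213039/100000) - (613039/75000)*x^2 - (1386961/960000)*x^3 + (451013/48000)*x^4
      - (8018857/1920000)*x^5 - (4127901929/921600000)*x^6 + (9023383/2880000)*x^7
      + (1389404209/1382400000)*x^8 - (4536961/5760000)*x^9 - (30231497/460800000)*x^10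
      + (353036311/4423680000)*x^11 - (6179117/663552000)*x^12 - (183671/117964800)*x^13
      + (605443/503316480)*x^14 - (625/5308416)*x^15 := by
  rcases le_or_gt x (3/10) with hc | hc
  · have hub : ∀ d : ℕ, x^d ≤ (3/10)^d := fun d => pow_le_pow_left₀ h0 hc d
    have hlb : ∀ d : ℕ, (0:ℝ) ≤ x^d := fun d => pow_nonneg h0 d
    have := hub 2; have := hub 3; have := hub 5; have := hub 6; have := hub 9
    have := hub 10; have := hub 12; have := hub 13; have := hub 15
    have := hlb 4; have := hlb 7; have := hlb 8; have := hlb 11; have := hlb 14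
    norm_num at *; linarith
  · rcases le_or_gt x (9/20) with hd | hd
    · have hub : ∀ d : ℕ, x^d ≤ (9/20)^d := fun d => pow_le_pow_left₀ h0 hd d
      have hlb : ∀ d : ℕ, (3/10:ℝ)^d ≤ x^d := fun d => pow_le_pow_left₀ (by norm_num) hc.le d
      have := hub 2; have := hub 3; have := hub 5; have := hub 6; have := hub 9
      have := hub 10; have := hub 12; have := hub 13; have := hub 15
      have := hlb 4; have := hlb 7; have := hlb 8; have := hlb 11; have := hlb 14
      norm_num at *; linarith
    · have hub : ∀ d : ℕ, x^d ≤ (1/2)^d := fun d => pow_le_pow_left₀ h0 h1 d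
      have hlb : ∀ d : ℕ, (9/20:ℝ)^d ≤ x^d := fun d => pow_le_pow_left₀ (by norm_num) hd.le d
      have := hub 2; have := hub 3; have := hub 5; have := hub 6; have := hub 9
      have := hub 10; have := hub 12; have := hub 13; have := hub 15
      have := hlb 4; have := hlb 7; have := hlb 8; have := hlb 11; have := hlb 14
      norm_num at *; linarith

/-- case-1 lower bound, pure algebra -/
private lemma alg1 (x p q C : ℝ) (hx0 : 0 ≤ x) (hx1 : x ≤ 1/2) (hp0 : 0 ≤ p) (hq0 : 0 ≤ q)
    (hpq : p^2 + q^2 = 1)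
    (hplb : x - x^3/6 - x^4*(5/96) ≤ p) (hpub : p ≤ x - x^3/6 + x^4*(5/96))
    (hqlb : 1 - x^2/2 - x^4*(5/96) ≤ q) (hqub : q ≤ 1 - x^2/2 + x^4*(5/96))
    (hC : C^2 ≤ 986961/100000) :
    (C^2/4) * (2*p*q)^2 ≤ (2*x)^2 + 2*(2*x)*(2*p*q)*(1 - 2*p^2) := by
  have hx2 : x^2 ≤ 1/4 := by nlinarith
  have hx2' : x^2 ≤ x/2 := by nlinarith
  have hx3 : x^3 ≤ x/4 := by nlinarith [mul_le_mul_of_nonneg_left hx2 hx0]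
  have hx4 : x^4 ≤ x/8 := by
    nlinarith [mul_le_mul_of_nonneg_left hx3 hx0, mul_le_mul_of_nonneg_left hx2' hx0]
  have hx4' : x^4 ≤ 1/16 := by nlinarith [mul_le_mul_of_nonneg_left hx3 hx0, hx4]
  have hx4nn : (0:ℝ) ≤ x^4 := by positivity
  have hplb0 : (0:ℝ) ≤ x - x^3/6 - x^4*(5/96) := by linarith
  have hqlb0 : (0:ℝ) ≤ 1 - x^2/2 - x^4*(5/96) := by linarith
  have hpub0 : (0:ℝ) ≤ x - x^3/6 + x^4*(5/96) := by linarith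
  have hqub0 : (0:ℝ) ≤ 1 - x^2/2 + x^4*(5/96) := by linarith
  have hA : (x - x^3/6 - x^4*(5/96)) * (1 - x^2/2 - x^4*(5/96)) ≤ p * q :=
    mul_le_mul hplb hqlb hqlb0 hp0
  have hA' := mul_le_mul_of_nonneg_left hA hx0
  have hB : p^3*q ≤ (x - x^3/6 + x^4*(5/96))^3 * (1 - x^2/2 + x^4*(5/96)) :=
    mul_le_mul (pow_le_pow_left₀ hp0 hpub 3) hqub hq0 (pow_nonneg hpub0 3)
  have hB' := mul_le_mul_of_nonneg_left hB hx0
  have hCp : p^2 ≤ (x - x^3/6 + x^4*(5/96))^2 := pow_le_pow_left₀ hp0 hpub 2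
  have hDp : (x - x^3/6 - x^4*(5/96))^4 ≤ p^4 := pow_le_pow_left₀ hplb0 hplb 4
  have hpq2 : (p*q)^2 = p^2 - p^4 := by nlinarith [hpq]
  have hπpq : C^2 * (p*q)^2 ≤ (986961/100000) * (p*q)^2 :=
    mul_le_mul_of_nonneg_right hC (sq_nonneg _)
  have hRpos := polyR hx0 hx1
  have hfinal := mul_le_mul_of_nonneg_left hRpos (sq_nonneg x)
  nlinarith [hA', hB', hCp, hDp, hpq2, hπpq, hfinal]
/-- univariate certificate for case-1 upper bound -/
private lemma polyT {x : ℝ} (h0 : 0 ≤ x) (h1 : x ≤ 1/2) :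
    4*x^2 + 8*x*((x - x^3/6 + x^4*(5/96))*(1 - x^2/2 + x^4*(5/96)))
        *(1 - 2*(x - x^3/6 - x^4*(5/96))^2) + (1 - 2*(x - x^3/6 - x^4*(5/96))^2)^2
      ≤ 154212504601/62500000000 := by
  rcases le_or_gt x (3/10) with hc | hc
  · have hub : ∀ d : ℕ, x^d ≤ (3/10)^d := fun d => pow_le_pow_left₀ h0 hc d
    have hlb : ∀ d : ℕ, (0:ℝ) ≤ x^d := fun d => pow_nonneg h0 d
    have := hub 2; have := hub 5; have := hub 6; have := hub 10; have := hub 11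
    have := hub 14; have := hub 15
    have := hlb 4; have := hlb 7; have := hlb 8; have := hlb 9; have := hlb 12
    have := hlb 13; have := hlb 16; have := hlb 17
    norm_num at *; linarith
  · rcases le_or_gt x (2/5) with hd | hd
    · have h0' : (0:ℝ) ≤ x - 3/10 := by linarith
      have h1' : x - 3/10 ≤ 1/10 := by linarith
      have hub : ∀ d : ℕ, (x - 3/10)^d ≤ (1/10)^d := fun d => pow_le_pow_left₀ h0' h1' d
      have hlb : ∀ d : ℕ, (0:ℝ) ≤ (x - 3/10)^d := fun d => pow_nonneg h0' d
      have := hub 1; have := hub 2; have := hub 3; have := hub 4; have := hub 5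
      have := hub 6; have := hub 7; have := hub 8; have := hub 9; have := hub 10
      have := hub 11; have := hub 12; have := hub 13; have := hub 14; have := hub 15
      have := hub 16; have := hub 17
      have := hlb 1; have := hlb 2; have := hlb 3; have := hlb 4; have := hlb 5
      have := hlb 6; have := hlb 7; have := hlb 8; have := hlb 9; have := hlb 10
      have := hlb 11; have := hlb 12; have := hlb 13; have := hlb 14; have := hlb 15
      have := hlb 16; have := hlb 17
      norm_num at *; linarith
    · rcases le_or_gt x (9/20) with he | he
      · have h0' : (0:ℝ) ≤ x - 2/5 := by linarith
        have h1' : x - 2/5 ≤ 1/20 := by linarith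
        have hub : ∀ d : ℕ, (x - 2/5)^d ≤ (1/20)^d := fun d => pow_le_pow_left₀ h0' h1' d
        have hlb : ∀ d : ℕ, (0:ℝ) ≤ (x - 2/5)^d := fun d => pow_nonneg h0' d
        have := hub 1; have := hub 2; have := hub 3; have := hub 4; have := hub 5
        have := hub 6; have := hub 7; have := hub 8; have := hub 9; have := hub 10
        have := hub 11; have := hub 12; have := hub 13; have := hub 14; have := hub 15
        have := hub 16; have := hub 17
        have := hlb 1; have := hlb 2; have := hlb 3; have := hlb 4; have := hlb 5
        have := hlb 6; have := hlb 7; have := hlb 8; have := hlb 9; have := hlb 10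
        have := hlb 11; have := hlb 12; have := hlb 13; have := hlb 14; have := hlb 15
        have := hlb 16; have := hlb 17
        norm_num at *; linarith
      · have h0' : (0:ℝ) ≤ x - 9/20 := by linarith
        have h1' : x - 9/20 ≤ 1/20 := by linarith
        have hub : ∀ d : ℕ, (x - 9/20)^d ≤ (1/20)^d := fun d => pow_le_pow_left₀ h0' h1' d
        have hlb : ∀ d : ℕ, (0:ℝ) ≤ (x - 9/20)^d := fun d => pow_nonneg h0' d
        have := hub 1; have := hub 2; have := hub 3; have := hub 4; have := hub 5
        have := hub 6; have := hub 7; have := hub 8; have := hub 9; have := hub 10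
        have := hub 11; have := hub 12; have := hub 13; have := hub 14; have := hub 15
        have := hub 16; have := hub 17
        have := hlb 1; have := hlb 2; have := hlb 3; have := hlb 4; have := hlb 5
        have := hlb 6; have := hlb 7; have := hlb 8; have := hlb 9; have := hlb 10
        have := hlb 11; have := hlb 12; have := hlb 13; have := hlb 14; have := hlb 15
        have := hlb 16; have := hlb 17
        norm_num at *; linarith
/-- helper monomial facts on [0, 0.5708] -/
private lemma polyW1 {u : ℝ} (h0 : 0 ≤ u) (h1 : u ≤ 5708/10000) :
    (1 - u^2/2 - u^4*(5/96)) * (u - u^3/6 - u^4*(5/96)) - u ≤ 0 := by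
  have h3nn : (0:ℝ) ≤ u^3 := by positivity
  have f2 := mul_le_mul_of_nonneg_left (pow_le_pow_left₀ h0 h1 2) h3nn
  have f3 := mul_le_mul_of_nonneg_left (pow_le_pow_left₀ h0 h1 3) h3nn
  have f4 := mul_le_mul_of_nonneg_left (pow_le_pow_left₀ h0 h1 4) h3nn
  have f5 := mul_le_mul_of_nonneg_left (pow_le_pow_left₀ h0 h1 5) h3nn
  have h4nn : (0:ℝ) ≤ u^4 := by positivity
  nlinarith [f2, f3, f4, f5, h3nn, h4nn]

private lemma polyW3 {u : ℝ} (h0 : 0 ≤ u) (h1 : u ≤ 5708/10000) :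
    0 ≤ u - (1 - u^2/2 + u^4*(5/96)) * (u - u^3/6 + u^4*(5/96)) := by
  have h3nn : (0:ℝ) ≤ u^3 := by positivity
  have f1 := mul_le_mul_of_nonneg_left (pow_le_pow_left₀ h0 h1 1) h3nn
  have f2 := mul_le_mul_of_nonneg_left (pow_le_pow_left₀ h0 h1 2) h3nn
  have f3 := mul_le_mul_of_nonneg_left (pow_le_pow_left₀ h0 h1 3) h3nn
  have f4 := mul_le_mul_of_nonneg_left (pow_le_pow_left₀ h0 h1 4) h3nn
  have f5 := mul_le_mul_of_nonneg_left (pow_le_pow_left₀ h0 h1 5) h3nn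
  nlinarith [f1, f2, f3, f4, f5, h3nn]

/-- univariate certificate for case-2 lower bound -/
private lemma polyP2 {u : ℝ} (h0 : 0 ≤ u) (h1 : u ≤ 5708/10000) :
    0 ≤ (3141593/1000000)*((1 - u^2/2 - u^4*(5/96))*(u - u^3/6 - u^4*(5/96)) - u)
      + (154212504601/62500000000)*(u - u^3/6 - u^4*(5/96))^2
      - 2*u*((1 - u^2/2 + u^4*(5/96))*(u - u^3/6 + u^4*(5/96))) + u^2 := by
  have h2nn : (0:ℝ) ≤ u^2 := by positivity
  have f1 := mul_le_mul_of_nonneg_left (pow_le_pow_left₀ h0 h1 1) h2nn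
  have f2 := mul_le_mul_of_nonneg_left (pow_le_pow_left₀ h0 h1 2) h2nn
  have f3 := mul_le_mul_of_nonneg_left (pow_le_pow_left₀ h0 h1 3) h2nn
  have f4 := mul_le_mul_of_nonneg_left (pow_le_pow_left₀ h0 h1 4) h2nn
  have f5 := mul_le_mul_of_nonneg_left (pow_le_pow_left₀ h0 h1 5) h2nn
  have f6 := mul_le_mul_of_nonneg_left (pow_le_pow_left₀ h0 h1 6) h2nn
  have f7 := mul_le_mul_of_nonneg_left (pow_le_pow_left₀ h0 h1 7) h2nn
  have g1 : (0:ℝ) ≤ u^2*u := by positivity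
  have g2 : (0:ℝ) ≤ u^2*u^2 := by positivity
  have g3 : (0:ℝ) ≤ u^2*u^3 := by positivity
  have g4 : (0:ℝ) ≤ u^2*u^4 := by positivity
  have g5 : (0:ℝ) ≤ u^2*u^5 := by positivity
  have g6 : (0:ℝ) ≤ u^2*u^6 := by positivity
  have g7 : (0:ℝ) ≤ u^2*u^7 := by positivity
  nlinarith [f1, f2, f3, f4, f5, f6, f7, g1, g2, g3, g4, g5, g6, g7, h2nn]

/-- univariate certificate for case-2 upper bound -/
private lemma polyQ2 {u : ℝ} (h0 : 0 ≤ u) (h1 : u ≤ 5708/10000) :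
    0 ≤ (3141592/1000000)*(u - (1 - u^2/2 + u^4*(5/96))*(u - u^3/6 + u^4*(5/96)))
      + 2*u*((1 - u^2/2 - u^4*(5/96))*(u - u^3/6 - u^4*(5/96)))
      - (u - u^3/6 + u^4*(5/96))^2 - u^2 := by
  have h3nn : (0:ℝ) ≤ u^3 := by positivity
  have f1 := mul_le_mul_of_nonneg_left (pow_le_pow_left₀ h0 h1 1) h3nn
  have f2 := mul_le_mul_of_nonneg_left (pow_le_pow_left₀ h0 h1 2) h3nn
  have f3 := mul_le_mul_of_nonneg_left (pow_le_pow_left₀ h0 h1 3) h3nn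
  have f4 := mul_le_mul_of_nonneg_left (pow_le_pow_left₀ h0 h1 4) h3nn
  have f5 := mul_le_mul_of_nonneg_left (pow_le_pow_left₀ h0 h1 5) h3nn
  have f6 := mul_le_mul_of_nonneg_left (pow_le_pow_left₀ h0 h1 6) h3nn
  have g1 : (0:ℝ) ≤ u^3*u := by positivity
  have g2 : (0:ℝ) ≤ u^3*u^2 := by positivity
  have g3 : (0:ℝ) ≤ u^3*u^3 := by positivity
  have g4 : (0:ℝ) ≤ u^3*u^4 := by positivity
  have g5 : (0:ℝ) ≤ u^3*u^5 := by positivity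
  have g6 : (0:ℝ) ≤ u^3*u^6 := by positivity
  nlinarith [f1, f2, f3, f4, f5, f6, g1, g2, g3, g4, g5, g6, h3nn]
/-- case-2 lower bound, pure algebra; S,C stand for sin u, cos u; the ξ-variable is t = P/2 - u -/
private lemma alg2lower (u S C P : ℝ) (hu0 : 0 ≤ u) (hu1 : u ≤ 5708/10000)
    (hS0 : 0 ≤ S) (hC0 : 0 ≤ C) (hSC : S^2 + C^2 = 1)
    (hSlb : u - u^3/6 - u^4*(5/96) ≤ S) (hSub : S ≤ u - u^3/6 + u^4*(5/96))
    (hClb : 1 - u^2/2 - u^4*(5/96) ≤ C) (hCub : C ≤ 1 - u^2/2 + u^4*(5/96))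
    (hPl : 3141592/1000000 ≤ P) (hPu : P ≤ 3141593/1000000) :
    (P^2/4) * C^2 ≤ (P/2 - u)^2 + 2*(P/2 - u)*C*S := by
  have hu2 : u^2 ≤ 1/2 := by nlinarith
  have hu3 : u^3 ≤ u/2 := by nlinarith [mul_le_mul_of_nonneg_left hu2 hu0]
  have hu4 : u^4 ≤ u/2 := by
    nlinarith [mul_le_mul_of_nonneg_left hu3 hu0, mul_le_mul_of_nonneg_left hu2 hu0]
  have hu4' : u^4 ≤ 1/4 := by nlinarith [mul_le_mul_of_nonneg_left hu3 hu0, hu4]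
  have hu4nn : (0:ℝ) ≤ u^4 := by positivity
  have hSlb0 : (0:ℝ) ≤ u - u^3/6 - u^4*(5/96) := by linarith
  have hClb0 : (0:ℝ) ≤ 1 - u^2/2 - u^4*(5/96) := by linarith
  have hSub0 : (0:ℝ) ≤ u - u^3/6 + u^4*(5/96) := by linarith
  have hCub0 : (0:ℝ) ≤ 1 - u^2/2 + u^4*(5/96) := by linarith
  have hP0 : (0:ℝ) ≤ P := by linarith
  have hCS_lb : (1 - u^2/2 - u^4*(5/96))*(u - u^3/6 - u^4*(5/96)) ≤ C*S :=
    mul_le_mul hClb hSlb hSlb0 hC0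
  have hCS_ub : C*S ≤ (1 - u^2/2 + u^4*(5/96))*(u - u^3/6 + u^4*(5/96)) :=
    mul_le_mul hCub hSub hS0 hCub0
  have hW1 := polyW1 hu0 hu1
  -- P*(C*S - u) ≥ piU * (clb*slb - u)
  have h1 : P*((1 - u^2/2 - u^4*(5/96))*(u - u^3/6 - u^4*(5/96)) - u) ≤ P*(C*S - u) :=
    mul_le_mul_of_nonneg_left (by linarith) hP0
  have h2 : (3141593/1000000)*((1 - u^2/2 - u^4*(5/96))*(u - u^3/6 - u^4*(5/96)) - u)
      ≤ P*((1 - u^2/2 - u^4*(5/96))*(u - u^3/6 - u^4*(5/96)) - u) :=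
    mul_le_mul_of_nonpos_right hPu hW1
  -- (P^2/4) * S^2 ≥ (piL^2/4) * slb^2
  have hP2 : ((3141592/1000000):ℝ)^2/4 ≤ P^2/4 := by nlinarith
  have h3 : ((3141592/1000000):ℝ)^2/4 * (u - u^3/6 - u^4*(5/96))^2 ≤ P^2/4 * S^2 :=
    mul_le_mul hP2 (pow_le_pow_left₀ hSlb0 hSlb 2) (sq_nonneg _) (by positivity)
  -- -2u*C*S ≥ -2u*cub*sub
  have h4 := mul_le_mul_of_nonneg_left hCS_ub hu0
  have h5 := polyP2 hu0 hu1
  have hPC : P^2*C^2 = P^2*(1 - S^2) := by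
    have : C^2 = 1 - S^2 := by linarith
    rw [this]
  nlinarith [h1, h2, h3, h4, h5, hPC]

/-- case-2 upper bound, pure algebra -/
private lemma alg2upper (u S C P : ℝ) (hu0 : 0 ≤ u) (hu1 : u ≤ 5708/10000)
    (hS0 : 0 ≤ S) (hC0 : 0 ≤ C) (hSC : S^2 + C^2 = 1)
    (hSlb : u - u^3/6 - u^4*(5/96) ≤ S) (hSub : S ≤ u - u^3/6 + u^4*(5/96))
    (hClb : 1 - u^2/2 - u^4*(5/96) ≤ C) (hCub : C ≤ 1 - u^2/2 + u^4*(5/96))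
    (hPl : 3141592/1000000 ≤ P) (hPu : P ≤ 3141593/1000000) :
    (P/2 - u)^2 + 2*(P/2 - u)*C*S + S^2 ≤ P^2/4 := by
  have hu2 : u^2 ≤ 1/2 := by nlinarith
  have hu3 : u^3 ≤ u/2 := by nlinarith [mul_le_mul_of_nonneg_left hu2 hu0]
  have hu4 : u^4 ≤ u/2 := by
    nlinarith [mul_le_mul_of_nonneg_left hu3 hu0, mul_le_mul_of_nonneg_left hu2 hu0]
  have hu4nn : (0:ℝ) ≤ u^4 := by positivity
  have hSlb0 : (0:ℝ) ≤ u - u^3/6 - u^4*(5/96) := by linarith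
  have hClb0 : (0:ℝ) ≤ 1 - u^2/2 - u^4*(5/96) := by linarith
  have hSub0 : (0:ℝ) ≤ u - u^3/6 + u^4*(5/96) := by linarith
  have hCub0 : (0:ℝ) ≤ 1 - u^2/2 + u^4*(5/96) := by linarith
  have hP0 : (0:ℝ) ≤ P := by linarith
  have hCS_lb : (1 - u^2/2 - u^4*(5/96))*(u - u^3/6 - u^4*(5/96)) ≤ C*S :=
    mul_le_mul hClb hSlb hSlb0 hC0
  have hCS_ub : C*S ≤ (1 - u^2/2 + u^4*(5/96))*(u - u^3/6 + u^4*(5/96)) :=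
    mul_le_mul hCub hSub hS0 hCub0
  have hW3 := polyW3 hu0 hu1
  -- P*(u - C*S) ≥ piL * (u - cub*sub)
  have h1 : P*(u - (1 - u^2/2 + u^4*(5/96))*(u - u^3/6 + u^4*(5/96))) ≤ P*(u - C*S) :=
    mul_le_mul_of_nonneg_left (by linarith) hP0
  have h2 : (3141592/1000000)*(u - (1 - u^2/2 + u^4*(5/96))*(u - u^3/6 + u^4*(5/96)))
      ≤ P*(u - (1 - u^2/2 + u^4*(5/96))*(u - u^3/6 + u^4*(5/96))) :=
    mul_le_mul_of_nonneg_right hPl hW3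
  -- 2u*C*S ≥ 2u*clb*slb
  have h4 := mul_le_mul_of_nonneg_left hCS_lb hu0
  -- S^2 ≤ sub^2
  have h6 : S^2 ≤ (u - u^3/6 + u^4*(5/96))^2 := pow_le_pow_left₀ hS0 hSub 2
  have h5 := polyQ2 hu0 hu1
  nlinarith [h1, h2, h4, h5, h6]

/-- case-1 upper bound, pure algebra (half-angle variables) -/
private lemma alg1upper (x p q P : ℝ) (hx0 : 0 ≤ x) (hx1 : x ≤ 1/2) (hp0 : 0 ≤ p) (hq0 : 0 ≤ q)
    (hpq : p^2 + q^2 = 1)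
    (hplb : x - x^3/6 - x^4*(5/96) ≤ p) (hpub : p ≤ x - x^3/6 + x^4*(5/96))
    (hqlb : 1 - x^2/2 - x^4*(5/96) ≤ q) (hqub : q ≤ 1 - x^2/2 + x^4*(5/96))
    (hPl : 3141592/1000000 ≤ P) :
    (2*x)^2 + 2*(2*x)*(2*p*q)*(1 - 2*p^2) + (1 - 2*p^2)^2 ≤ P^2/4 := by
  have hx2 : x^2 ≤ 1/4 := by nlinarith
  have hx2' : x^2 ≤ x/2 := by nlinarith
  have hx3 : x^3 ≤ x/4 := by nlinarith [mul_le_mul_of_nonneg_left hx2 hx0]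
  have hx4 : x^4 ≤ x/8 := by
    nlinarith [mul_le_mul_of_nonneg_left hx3 hx0, mul_le_mul_of_nonneg_left hx2' hx0]
  have hx4' : x^4 ≤ 1/16 := by nlinarith [mul_le_mul_of_nonneg_left hx3 hx0, hx4]
  have hx4nn : (0:ℝ) ≤ x^4 := by positivity
  have hplb0 : (0:ℝ) ≤ x - x^3/6 - x^4*(5/96) := by linarith
  have hqub0 : (0:ℝ) ≤ 1 - x^2/2 + x^4*(5/96) := by linarith
  -- p ≤ 1/2 hence 0 ≤ 1 - 2p^2
  have hpub' : p ≤ 1/2 := by nlinarith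
  have hcp0 : (0:ℝ) ≤ 1 - 2*p^2 := by nlinarith
  have hcp : 1 - 2*p^2 ≤ 1 - 2*(x - x^3/6 - x^4*(5/96))^2 := by
    have := pow_le_pow_left₀ hplb0 hplb 2; linarith
  have hcpub0 : (0:ℝ) ≤ 1 - 2*(x - x^3/6 - x^4*(5/96))^2 := le_trans hcp0 hcp
  have hpq_ub : p*q ≤ (x - x^3/6 + x^4*(5/96))*(1 - x^2/2 + x^4*(5/96)) :=
    mul_le_mul hpub hqub hq0 (by linarith)
  have hpq0 : (0:ℝ) ≤ p*q := mul_nonneg hp0 hq0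
  have hmid : (p*q)*(1 - 2*p^2)
      ≤ ((x - x^3/6 + x^4*(5/96))*(1 - x^2/2 + x^4*(5/96)))*(1 - 2*(x - x^3/6 - x^4*(5/96))^2) :=
    mul_le_mul hpq_ub hcp hcp0 (mul_nonneg (by linarith) hqub0)
  have hmid' := mul_le_mul_of_nonneg_left hmid hx0
  have hsq : (1 - 2*p^2)^2 ≤ (1 - 2*(x - x^3/6 - x^4*(5/96))^2)^2 :=
    pow_le_pow_left₀ hcp0 hcp 2
  have hT := polyT hx0 hx1
  have hP2 : (154212504601/62500000000 : ℝ) ≤ P^2/4 := by nlinarith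
  nlinarith [hmid', hsq, hT, hP2]
/-- lower-bound inequality on [0, π/2) -/
private lemma keyA {t : ℝ} (h0 : 0 ≤ t) (h2 : t < π/2) :
    (π^2/4) * Real.sin t ^ 2 ≤ t^2 + 2*t*Real.sin t*Real.cos t := by
  have hπl := Real.pi_gt_d6
  have hπu := Real.pi_lt_d6
  rcases le_or_gt t 1 with h1 | h1
  · have hx0 : (0:ℝ) ≤ t/2 := by linarith
    have hx1 : t/2 ≤ 1/2 := by linarith
    have hx1' : t/2 ≤ 1 := by linarith
    have hp0 : 0 ≤ Real.sin (t/2) := Real.sin_nonneg_of_nonneg_of_le_pi hx0 (by linarith)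
    have hq0 : 0 ≤ Real.cos (t/2) := Real.cos_nonneg_of_mem_Icc ⟨by linarith, by linarith⟩
    have hpq : Real.sin (t/2)^2 + Real.cos (t/2)^2 = 1 := Real.sin_sq_add_cos_sq _
    have halg := alg1 (t/2) (Real.sin (t/2)) (Real.cos (t/2)) π hx0 hx1 hp0 hq0 hpq
      (sin_lb' hx0 hx1') (sin_ub' hx0 hx1') (cos_lb' hx0 hx1') (cos_ub' hx0 hx1')
      (by nlinarith)
    have hs : Real.sin t = 2 * Real.sin (t/2) * Real.cos (t/2) := by
      rw [← Real.sin_two_mul]; ring_nf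
    have hc : Real.cos t = 1 - 2 * Real.sin (t/2)^2 := by
      rw [show t = 2*(t/2) by ring, Real.cos_two_mul, Real.cos_sq']; ring
    rw [hs, hc]
    nlinarith [halg]
  · have hu0 : (0:ℝ) ≤ π/2 - t := by linarith
    have hu1 : π/2 - t ≤ 5708/10000 := by linarith
    have hu1' : π/2 - t ≤ 1 := by linarith
    have hS0 : 0 ≤ Real.sin (π/2-t) := Real.sin_nonneg_of_nonneg_of_le_pi hu0 (by linarith)
    have hC0 : 0 ≤ Real.cos (π/2-t) := Real.cos_nonneg_of_mem_Icc ⟨by linarith, by linarith⟩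
    have hSC : Real.sin (π/2-t)^2 + Real.cos (π/2-t)^2 = 1 := Real.sin_sq_add_cos_sq _
    have halg := alg2lower (π/2-t) (Real.sin (π/2-t)) (Real.cos (π/2-t)) π hu0 hu1 hS0 hC0 hSC
      (sin_lb' hu0 hu1') (sin_ub' hu0 hu1') (cos_lb' hu0 hu1') (cos_ub' hu0 hu1')
      (by linarith) (by linarith)
    have hs : Real.sin t = Real.cos (π/2-t) := by rw [Real.cos_pi_div_two_sub]
    have hc : Real.cos t = Real.sin (π/2-t) := by rw [Real.sin_pi_div_two_sub]
    rw [hs, hc]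
    nlinarith [halg]

/-- upper-bound inequality on [0, π/2) -/
private lemma keyB {t : ℝ} (h0 : 0 ≤ t) (h2 : t < π/2) :
    t^2 + 2*t*Real.sin t*Real.cos t + Real.cos t^2 ≤ π^2/4 := by
  have hπl := Real.pi_gt_d6
  have hπu := Real.pi_lt_d6
  rcases le_or_gt t 1 with h1 | h1
  · have hx0 : (0:ℝ) ≤ t/2 := by linarith
    have hx1 : t/2 ≤ 1/2 := by linarith
    have hx1' : t/2 ≤ 1 := by linarith
    have hp0 : 0 ≤ Real.sin (t/2) := Real.sin_nonneg_of_nonneg_of_le_pi hx0 (by linarith)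
    have hq0 : 0 ≤ Real.cos (t/2) := Real.cos_nonneg_of_mem_Icc ⟨by linarith, by linarith⟩
    have hpq : Real.sin (t/2)^2 + Real.cos (t/2)^2 = 1 := Real.sin_sq_add_cos_sq _
    have halg := alg1upper (t/2) (Real.sin (t/2)) (Real.cos (t/2)) π hx0 hx1 hp0 hq0 hpq
      (sin_lb' hx0 hx1') (sin_ub' hx0 hx1') (cos_lb' hx0 hx1') (cos_ub' hx0 hx1')
      (by linarith)
    have hs : Real.sin t = 2 * Real.sin (t/2) * Real.cos (t/2) := by
      rw [← Real.sin_two_mul]; ring_nf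
    have hc : Real.cos t = 1 - 2 * Real.sin (t/2)^2 := by
      rw [show t = 2*(t/2) by ring, Real.cos_two_mul, Real.cos_sq']; ring
    rw [hs, hc]
    nlinarith [halg]
  · have hu0 : (0:ℝ) ≤ π/2 - t := by linarith
    have hu1 : π/2 - t ≤ 5708/10000 := by linarith
    have hu1' : π/2 - t ≤ 1 := by linarith
    have hS0 : 0 ≤ Real.sin (π/2-t) := Real.sin_nonneg_of_nonneg_of_le_pi hu0 (by linarith)
    have hC0 : 0 ≤ Real.cos (π/2-t) := Real.cos_nonneg_of_mem_Icc ⟨by linarith, by linarith⟩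
    have hSC : Real.sin (π/2-t)^2 + Real.cos (π/2-t)^2 = 1 := Real.sin_sq_add_cos_sq _
    have halg := alg2upper (π/2-t) (Real.sin (π/2-t)) (Real.cos (π/2-t)) π hu0 hu1 hS0 hC0 hSC
      (sin_lb' hu0 hu1') (sin_ub' hu0 hu1') (cos_lb' hu0 hu1') (cos_ub' hu0 hu1')
      (by linarith) (by linarith)
    have hs : Real.sin t = Real.cos (π/2-t) := by rw [Real.cos_pi_div_two_sub]
    have hc : Real.cos t = Real.sin (π/2-t) := by rw [Real.sin_pi_div_two_sub]
    rw [hs, hc]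
    nlinarith [halg]

theorem stmt_9 :
    (∀ t ∈ Ioo (-(π / 2)) (π / 2), 1 - π ^ 2 / 4 ≤ xi t ∧ xi t ≤ 0) ∧
    xi 0 = 1 - π ^ 2 / 4 := by
  constructor
  · rintro t ⟨hl, hr⟩
    have hc : 0 < Real.cos t := Real.cos_pos_of_mem_Ioo ⟨hl, hr⟩
    have hc2 : 0 < Real.cos t ^ 2 := by positivity
    have hA : (π^2/4) * Real.sin t ^ 2 ≤ t^2 + 2*t*Real.sin t*Real.cos t := by
      rcases le_or_gt 0 t with h | h
      · exact keyA h hr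
      · have := keyA (t := -t) (by linarith) (by linarith)
        rw [Real.sin_neg, Real.cos_neg] at this
        nlinarith [this]
    have hB : t^2 + 2*t*Real.sin t*Real.cos t + Real.cos t^2 ≤ π^2/4 := by
      rcases le_or_gt 0 t with h | h
      · exact keyB h hr
      · have := keyB (t := -t) (by linarith) (by linarith)
        rw [Real.sin_neg, Real.cos_neg] at this
        nlinarith [this]
    have hs2 : Real.sin t ^ 2 = 1 - Real.cos t ^ 2 := Real.sin_sq t
    rw [hs2] at hA
    constructor
    · rw [xi, le_div_iff₀ hc2]
      linarith
    · rw [xi]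
      apply div_nonpos_of_nonpos_of_nonneg _ (sq_nonneg _)
      linarith
  · rw [xi]
    norm_num
end
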